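/- arXiv:1708.01854 — 5 statements merged into one kernel-verified Lean document; each statement's English description precedes it below -/
import Mathlib

section
/- Let R be a nontrivial commutative ring and n a positive integer, and equip the free module R^n with the Hamming weight with respect to the standard basis e_1, …, e_n. An R-linear automorphism ρ of R^n preserves the Hamming weight (w(ρ(x)) = w(x) for all x ∈ R^n) if and only if there exist a permutation π of {1,…,n} and units r_1, …, r_n ∈ R^* such that ρ(e_i) = r_i · e_{π(i)} for all i. Consequently, the group of Hamming-weight-preserving R-linear automorphisms of R^n is isomorphic to the wreath product (R^*)^n ⋊ Σ_n, where the symmetric group Σ_n acts on (R^*)^n by permuting coordinates. -/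
/-- The group of `R`-linear automorphisms of `R^n` preserving the Hamming weight. -/
def hammingIsometryGroup (n : ℕ) (R : Type*) [CommRing R] [DecidableEq R] :
    Subgroup ((Fin n → R) ≃ₗ[R] (Fin n → R)) where
  carrier := {ρ | ∀ x : Fin n → R, hammingNorm (ρ x) = hammingNorm x}
  one_mem' := fun _ => rfl
  mul_mem' := by
    intro a b ha hb x
    exact (ha (b x)).trans (hb x)
  inv_mem' := by
    intro a ha x
    have h := ha (a.symm x)
    rw [a.apply_symm_apply] at h
    exact h.symm

/-- The symmetric group `Σ_n` acting on `(Rˣ)^n` by permuting coordinates. -/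
def permOnUnits (n : ℕ) (R : Type*) [CommRing R] :
    Equiv.Perm (Fin n) →* MulAut (Fin n → Rˣ) where
  toFun π :=
    { toFun := fun v => v ∘ π.symm
      invFun := fun v => v ∘ π
      left_inv := fun v => by ext i; simp
      right_inv := fun v => by ext i; simp
      map_mul' := fun v w => rfl }
  map_one' := by ext v i; rfl
  map_mul' := fun π τ => rfl

/-!
A weight-preserving `ρ` sends each `e i`, which has weight one, to a vector of weight one, that
is, to some `c i • e (p i)`; likewise `ρ⁻¹ (e k) = d k • e (q k)`. Reading `ρ⁻¹ (ρ (e i)) = e i`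
at coordinate `i` in the nontrivial ring `R` gives `q (p i) = i` and `c i * d (p i) = 1`, so `p`
is a permutation and the `c i` are units. Conversely, a monomial map
`x ↦ (v j * x (π⁻¹ j))_j` only relabels the support of `x`. Sending `(v, π)` to it is an
injective homomorphism out of the wreath product, whose range is the isometry group by the above.
-/

open Equiv

section Single

variable {ι M : Type*} [Fintype ι] [DecidableEq ι] [Zero M] [DecidableEq M]

theorem hammingNorm_single {c : M} (hc : c ≠ 0) (i : ι) :
    hammingNorm (Pi.single i c : ι → M) = 1 := by
  rw [hammingNorm, Finset.card_eq_one]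
  refine ⟨i, Finset.ext fun j => ?_⟩
  by_cases hj : j = i <;> simp [hj, hc]

theorem exists_eq_single_of_hammingNorm_eq_one {x : ι → M} (hx : hammingNorm x = 1) :
    ∃ j c, x = Pi.single j c := by
  obtain ⟨j, hj⟩ := Finset.card_eq_one.mp hx
  refine ⟨j, x j, funext fun k => ?_⟩
  rcases eq_or_ne k j with rfl | hk
  · simp
  · have : k ∉ Finset.univ.filter (x · ≠ 0) := by simp [hj, hk]
    simpa [hk] using this

end Single

theorem Pi.single_eq_single_iff {ι M : Type*} [DecidableEq ι] [Zero M] {i j : ι} {a b : M}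
    (ha : a ≠ 0) : (Pi.single i a : ι → M) = Pi.single j b ↔ i = j ∧ a = b := by
  refine ⟨fun h => ?_, fun ⟨hij, hab⟩ => hij ▸ hab ▸ rfl⟩
  have hij : i = j := by
    by_contra hij
    exact ha (by simpa [hij] using congrFun h i)
  subst hij
  exact ⟨rfl, Pi.single_injective i h⟩

section Reciprocity

variable {ι R : Type*} [DecidableEq ι] [CommRing R] [Nontrivial R]

theorem eq_and_mul_eq_one_of_apply_single {f g : (ι → R) →ₗ[R] (ι → R)}
    (hgf : ∀ x, g (f x) = x) {p q : ι → ι} {c d : ι → R}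
    (hf : ∀ i, f (Pi.single i 1) = Pi.single (p i) (c i))
    (hg : ∀ i, g (Pi.single i 1) = Pi.single (q i) (d i)) (i : ι) :
    q (p i) = i ∧ c i * d (p i) = 1 := by
  have h := hgf (Pi.single i 1)
  rw [hf, ← mul_one (c i), ← smul_eq_mul, Pi.single_smul', map_smul, hg, ← Pi.single_smul',
    smul_eq_mul, eq_comm, Pi.single_eq_single_iff one_ne_zero] at h
  exact ⟨h.1.symm, h.2.symm⟩

end Reciprocity

section Preserving

variable {ι R : Type*} [Fintype ι] [DecidableEq ι] [CommRing R] [DecidableEq R]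

theorem exists_perm_units_of_hammingNorm_map_eq [Nontrivial R] (ρ : (ι → R) ≃ₗ[R] (ι → R))
    (hρ : ∀ x, hammingNorm (ρ x) = hammingNorm x) :
    ∃ (π : Perm ι) (r : ι → Rˣ), ∀ i, ρ (Pi.single i 1) = (r i : R) • Pi.single (π i) 1 := by
  have apply_single (σ : (ι → R) ≃ₗ[R] (ι → R)) (hσ : ∀ x, hammingNorm (σ x) = hammingNorm x)
      (i : ι) : ∃ j c, σ (Pi.single i 1) = Pi.single j c :=
    exists_eq_single_of_hammingNorm_eq_one ((hσ _).trans (hammingNorm_single one_ne_zero i))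
  have hρ' (y : ι → R) : hammingNorm (ρ.symm y) = hammingNorm y := by
    rw [← hρ, ρ.apply_symm_apply]
  choose p c hpc using apply_single ρ hρ
  choose q d hqd using apply_single ρ.symm hρ'
  have h₁ := eq_and_mul_eq_one_of_apply_single (f := ρ.toLinearMap) (g := ρ.symm.toLinearMap)
    ρ.symm_apply_apply hpc hqd
  have h₂ := eq_and_mul_eq_one_of_apply_single (f := ρ.symm.toLinearMap) (g := ρ.toLinearMap)
    ρ.apply_symm_apply hqd hpc
  refine ⟨⟨p, q, fun i => (h₁ i).1, fun k => (h₂ k).1⟩,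
    fun i => .mkOfMulEqOne _ _ (h₁ i).2, fun i => ?_⟩
  rw [hpc, Units.val_mkOfMulEqOne, ← Pi.single_smul', smul_eq_mul, mul_one]
  rfl

end Preserving

section Monomial

variable {ι R : Type*} [CommRing R]

def monomialEquiv (v : ι → Rˣ) (π : Perm ι) : (ι → R) ≃ₗ[R] (ι → R) :=
  (LinearEquiv.funCongrLeft R R π.symm).trans
    (LinearEquiv.piCongrRight fun j => LinearEquiv.smulOfUnit (v j))

@[simp]
theorem monomialEquiv_apply (v : ι → Rˣ) (π : Perm ι) (x : ι → R) (j : ι) :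
    monomialEquiv v π x j = v j * x (π.symm j) :=
  rfl

theorem hammingNorm_monomialEquiv [Fintype ι] [DecidableEq R] (v : ι → Rˣ) (π : Perm ι)
    (x : ι → R) : hammingNorm (monomialEquiv v π x) = hammingNorm x :=
  (Finset.card_equiv π fun j => by simp [Units.mul_right_eq_zero]).symm

theorem monomialEquiv_single [DecidableEq ι] (v : ι → Rˣ) (π : Perm ι) (i : ι) :
    monomialEquiv v π (Pi.single i 1) = Pi.single (π i) (v (π i) : R) := by
  ext j
  by_cases hj : j = π i <;> simp [Equiv.symm_apply_eq, hj]

theorem eq_monomialEquiv_of_apply_single [Finite ι] [DecidableEq ι] {ρ : (ι → R) ≃ₗ[R] (ι → R)}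
    {π : Perm ι} {r : ι → Rˣ} (h : ∀ i, ρ (Pi.single i 1) = (r i : R) • Pi.single (π i) 1) :
    ρ = monomialEquiv (r ∘ π.symm) π :=
  (Pi.basisFun R ι).ext' fun i => by
    simp [h, monomialEquiv_single, ← Pi.single_smul']

end Monomial

section Wreath

variable (n : ℕ) (R : Type*) [CommRing R]

@[simp]
theorem permOnUnits_apply (π : Perm (Fin n)) (v : Fin n → Rˣ) : permOnUnits n R π v = v ∘ π.symm :=
  rfl

def monomialHom : (Fin n → Rˣ) ⋊[permOnUnits n R] Perm (Fin n) →*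
    ((Fin n → R) ≃ₗ[R] (Fin n → R)) where
  toFun p := monomialEquiv p.left p.right
  map_one' := by ext; simp [Perm.one_def]
  map_mul' p q := by ext x j; simp [mul_assoc, Perm.mul_def]

variable {n R}

theorem monomialHom_injective [Nontrivial R] : Function.Injective (monomialHom n R) := by
  rw [injective_iff_map_eq_one]
  intro p hp
  have h (i : Fin n) : i = p.right i ∧ 1 = (p.left (p.right i) : R) := by
    have hp' : monomialEquiv p.left p.right = 1 := hp
    have := DFunLike.congr_fun hp' (Pi.single i 1)
    rwa [monomialEquiv_single, eq_comm, LinearEquiv.coe_one, id,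
      Pi.single_eq_single_iff one_ne_zero] at this
  have hright : p.right = 1 := Perm.ext fun i => (h i).1.symm
  have hleft : p.left = 1 := funext fun i => Units.ext (by simpa [← (h i).1] using (h i).2.symm)
  exact SemidirectProduct.ext hleft hright

theorem range_monomialHom [Nontrivial R] [DecidableEq R] :
    (monomialHom n R).range = hammingIsometryGroup n R := by
  ext ρ
  constructor
  · rintro ⟨p, rfl⟩ x
    exact hammingNorm_monomialEquiv _ _ x
  · intro hρ
    obtain ⟨π, r, hr⟩ := exists_perm_units_of_hammingNorm_map_eq ρ hρ
    exact ⟨⟨r ∘ π.symm, π⟩, (eq_monomialEquiv_of_apply_single hr).symm⟩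

end Wreath

/-- over a nontrivial commutative ring `R`, an `R`-linear automorphism of
`R^n` preserves the Hamming weight iff it is monomial, i.e. sends each standard basis
vector `e_i` to `r_i • e_{π i}` for a permutation `π` and units `r_i`; consequently the
group of Hamming-weight preserving `R`-linear automorphisms of `R^n` is isomorphic to
the wreath product `(Rˣ)^n ⋊ Σ_n`. -/
theorem hamming_isometry_iff_monomial (n : ℕ) (R : Type*) [CommRing R] [Nontrivial R]
    [DecidableEq R] :
    (∀ ρ : (Fin n → R) ≃ₗ[R] (Fin n → R),
      (∀ x : Fin n → R, hammingNorm (ρ x) = hammingNorm x) ↔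
        ∃ (π : Equiv.Perm (Fin n)) (r : Fin n → Rˣ), ∀ i : Fin n,
          ρ (Pi.single i 1) = (r i : R) • (Pi.single (π i) 1 : Fin n → R)) ∧
    Nonempty (hammingIsometryGroup n R ≃*
      (Fin n → Rˣ) ⋊[permOnUnits n R] Equiv.Perm (Fin n)) := by
  refine ⟨fun ρ => ⟨exists_perm_units_of_hammingNorm_map_eq ρ, ?_⟩,
    ⟨((MonoidHom.ofInjective monomialHom_injective).trans
      (MulEquiv.subgroupCongr range_monomialHom)).symm⟩⟩
  rintro ⟨π, r, hr⟩ x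
  rw [eq_monomialEquiv_of_apply_single hr]
  exact hammingNorm_monomialEquiv _ _ x
end

section
/- Let C_n = ⟨σ⟩ be a cyclic group of order n acting on a field F by field automorphisms, and let N : F^* → F^*, N(x) = ∏_{i=0}^{n-1} σ^i(x), be the norm map. Then two 2-cocycles f_1, f_2 : C_n × C_n → F^* (for this action) are cohomologous if and only if β_{f_1}^{-1} · β_{f_2} lies in the image N(F^*), where β_f := ∏_{i=0}^{n-1} f(σ^i, σ). Consequently, the map f ↦ β_f induces a group isomorphism between the group of 2-cocycles modulo 2-coboundaries H²_η(C_n, F^*) and the quotient group (F^*)^{C_n} / N(F^*). -/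
def IsTwoCocycle {G F : Type*} [Group G] [Field F] (η : G →* RingAut F)
    (f : G → G → Fˣ) : Prop :=
  ∀ g h k : G, η g (f h k : F) * ((f g (h * k) : Fˣ) : F) =
    ((f g h : Fˣ) : F) * ((f (g * h) k : Fˣ) : F)

def IsTwoCoboundary {G F : Type*} [Group G] [Field F] (η : G →* RingAut F)
    (f : G → G → Fˣ) : Prop :=
  ∃ r : G → Fˣ, ∀ g h : G,
    (f g h : F) = (r g : F) * η g (r h : F) * (((r (g * h))⁻¹ : Fˣ) : F)

def Cohomologous {G F : Type*} [Group G] [Field F] (η : G →* RingAut F)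
    (f₁ f₂ : G → G → Fˣ) : Prop :=
  IsTwoCoboundary η fun g h => f₁ g h * (f₂ g h)⁻¹

/-- The group of 2-cocycles, as a subgroup of all functions `G → G → Fˣ`. -/
def twoCocycles {G F : Type*} [Group G] [Field F] (η : G →* RingAut F) :
    Subgroup (G → G → Fˣ) where
  carrier := {f | IsTwoCocycle η f}
  one_mem' := by intro g h k; simp
  mul_mem' := by
    intro a b ha hb g h k
    simp only [Pi.mul_apply, Units.val_mul, map_mul]
    rw [mul_mul_mul_comm, ha g h k, hb g h k, mul_mul_mul_comm]
  inv_mem' := by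
    intro a ha g h k
    simp only [Pi.inv_apply, Units.val_inv_eq_inv_val, map_inv₀]
    rw [← mul_inv, ← mul_inv, ha g h k]

/-- The group of 2-coboundaries, as a subgroup of all functions `G → G → Fˣ`. -/
def twoCoboundaries {G F : Type*} [Group G] [Field F] (η : G →* RingAut F) :
    Subgroup (G → G → Fˣ) where
  carrier := {f | IsTwoCoboundary η f}
  one_mem' := ⟨1, by intro g h; simp⟩
  mul_mem' := by
    rintro a b ⟨r, hr⟩ ⟨t, ht⟩
    refine ⟨r * t, fun g h => ?_⟩
    simp only [Pi.mul_apply, Units.val_mul, map_mul, mul_inv, hr g h, ht g h,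
      Units.val_inv_eq_inv_val]
    ring
  inv_mem' := by
    rintro a ⟨r, hr⟩
    refine ⟨r⁻¹, fun g h => ?_⟩
    simp only [Pi.inv_apply, Units.val_inv_eq_inv_val, map_inv₀, hr g h, inv_inv, mul_inv]

/-- The second cohomology group `H²_η(G, F^*)`: 2-cocycles modulo 2-coboundaries. -/
abbrev H2 {G F : Type*} [Group G] [Field F] (η : G →* RingAut F) :=
  twoCocycles η ⧸ ((twoCoboundaries η).subgroupOf (twoCocycles η))

/-- The norm map `x ↦ ∏_{i=0}^{n-1} σ^i(x)` on `F^*`. -/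
def cyclicNormHom {G F : Type*} [Group G] [Field F] (η : G →* RingAut F) (σ : G) (n : ℕ) :
    Fˣ →* Fˣ where
  toFun x := ∏ i ∈ Finset.range n, Units.map (η (σ ^ i)).toMonoidHom x
  map_one' := by simp
  map_mul' x y := by simp [Finset.prod_mul_distrib]

/-- The subgroup `(F^*)^{C_n}` of elements of `F^*` fixed by the action. -/
def fixedUnits {G F : Type*} [Group G] [Field F] (η : G →* RingAut F) :
    Subgroup Fˣ where
  carrier := {x | ∀ g : G, η g (x : F) = (x : F)}
  one_mem' := by intro g; simp
  mul_mem' := by intro a b ha hb g; simp [ha g, hb g]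
  inv_mem' := by intro a ha g; simp [ha g]

/-!
Restricted to the powers of `σ`, a 2-cocycle `f` is the coboundary of the sequence
`ρ m = f(1,1) · (∏_{j<m} f(σ^j, σ))⁻¹` on `ℕ`, and comparing `f(σ^i, σ^n)` with `f(σ^i, 1)` gives
`ρ (i + n) = ρ i · σ^i(β_f)⁻¹`. Multiplying `ρ` by the partial norms `∏_{j<m} σ^j(x)`, a 1-cocycle
along `ℕ` ending at `N(x)`, leaves its coboundary unchanged and makes it `n`-periodic exactly when
`β_f = N(x)`; a periodic sequence descends to a 1-cochain on `C_n`. Conversely, `β` of the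
coboundary of `r` telescopes to `N(r(σ))`. Every fixed `u` is reached, modulo norms, by the cocycle
`(σ^i, σ^j) ↦ u^⌊(i + j)/n⌋` (`0 ≤ i, j < n`) recording the carry of addition modulo `n`.
-/

section

variable {G M : Type*} [Monoid G] [CommMonoid M] (σ : G)

def betaHom (m : ℕ) : (G → G → M) →* M where
  toFun f := ∏ j ∈ Finset.range m, f (σ ^ j) σ
  map_one' := by simp
  map_mul' f f' := by simp [Finset.prod_mul_distrib]

lemma betaHom_apply (m : ℕ) (f : G → G → M) :
    betaHom σ m f = ∏ j ∈ Finset.range m, f (σ ^ j) σ := rfl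

lemma betaHom_zero : betaHom (M := M) σ 0 = 1 := by
  ext f; simp [betaHom]

lemma betaHom_succ (m : ℕ) (f : G → G → M) :
    betaHom σ (m + 1) f = betaHom σ m f * f (σ ^ m) σ :=
  Finset.prod_range_succ _ m

end

section

variable {G F : Type*} [Group G] [Field F] (η : G →* RingAut F)

def unitsAct (g : G) : Fˣ →* Fˣ := Units.map (η g).toMonoidHom

lemma val_unitsAct (g : G) (u : Fˣ) : (unitsAct η g u : F) = η g u := rfl

lemma unitsAct_mul (g h : G) (u : Fˣ) :
    unitsAct η (g * h) u = unitsAct η g (unitsAct η h u) := by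
  ext; simp [val_unitsAct]

lemma cyclicNormHom_apply (σ : G) (n : ℕ) (x : Fˣ) :
    cyclicNormHom η σ n x = ∏ i ∈ Finset.range n, unitsAct η (σ ^ i) x := rfl

lemma cyclicNormHom_add (σ : G) (x : Fˣ) (i k : ℕ) :
    cyclicNormHom η σ (i + k) x =
      cyclicNormHom η σ i x * unitsAct η (σ ^ i) (cyclicNormHom η σ k x) := by
  simp only [cyclicNormHom_apply, Finset.prod_range_add, map_prod, ← unitsAct_mul, pow_add]

lemma unitsAct_eq_of_mem_fixedUnits {u : Fˣ} (hu : u ∈ fixedUnits η) (g : G) :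
    unitsAct η g u = u :=
  Units.ext (hu g)

lemma cyclicNormHom_eq_pow {σ : G} {n : ℕ} {x : Fˣ} (hx : x ∈ fixedUnits η) :
    cyclicNormHom η σ n x = x ^ n := by
  simp [cyclicNormHom_apply, unitsAct_eq_of_mem_fixedUnits η hx]

variable {η}

lemma isTwoCocycle_iff {f : G → G → Fˣ} :
    IsTwoCocycle η f ↔
      ∀ g h k, unitsAct η g (f h k) * f g (h * k) = f g h * f (g * h) k := by
  simp only [IsTwoCocycle, Units.ext_iff, Units.val_mul, val_unitsAct]

lemma isTwoCoboundary_iff {f : G → G → Fˣ} :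
    IsTwoCoboundary η f ↔
      ∃ r : G → Fˣ, ∀ g h, f g h = r g * unitsAct η g (r h) * (r (g * h))⁻¹ := by
  simp only [IsTwoCoboundary, Units.ext_iff, Units.val_mul, val_unitsAct]

lemma mem_fixedUnits_of_generator {σ : G} (hgen : ∀ g : G, g ∈ Subgroup.zpowers σ) {u : Fˣ}
    (hu : unitsAct η σ u = u) : u ∈ fixedUnits η := by
  let stab : Subgroup G := (MulAction.stabilizer (RingAut F) (u : F)).comap η
  have hσ : σ ∈ stab := by
    simp only [stab, Subgroup.mem_comap, MulAction.mem_stabilizer_iff, RingAut.smul_def]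
    exact congrArg Units.val hu
  intro g
  exact Subgroup.zpowers_le.mpr hσ (hgen g)

lemma IsTwoCocycle.apply_one_right {f : G → G → Fˣ} (hf : IsTwoCocycle η f) (g : G) :
    f g 1 = unitsAct η g (f 1 1) := by
  have h := isTwoCocycle_iff.mp hf g 1 1
  rw [mul_one, mul_one] at h
  exact (mul_right_cancel h).symm

variable (η) in
def powCoboundary (σ : G) (ρ : ℕ → Fˣ) (i k : ℕ) : Fˣ :=
  ρ i * unitsAct η (σ ^ i) (ρ k) * (ρ (i + k))⁻¹

variable {σ : G}

lemma powCoboundary_mul_of_add_eq {ρ X : ℕ → Fˣ}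
    (hX : ∀ i k, X (i + k) = X i * unitsAct η (σ ^ i) (X k)) :
    powCoboundary η σ (ρ * X) = powCoboundary η σ ρ := by
  funext i k
  simp only [powCoboundary, Pi.mul_apply, map_mul, hX, mul_inv]
  ext
  simp only [Units.val_mul, Units.val_inv_eq_inv_val]
  field_simp

lemma IsTwoCocycle.eq_powCoboundary {f : G → G → Fˣ} (hf : IsTwoCocycle η f) (i k : ℕ) :
    f (σ ^ i) (σ ^ k) = powCoboundary η σ (fun m ↦ f 1 1 * (betaHom σ m f)⁻¹) i k := by
  induction k with
  | zero =>
    rw [pow_zero, hf.apply_one_right]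
    simp only [powCoboundary, add_zero, betaHom_zero, MonoidHom.one_apply, inv_one, mul_one]
    ext
    simp only [Units.val_mul, Units.val_inv_eq_inv_val]
    field_simp
  | succ k ih =>
    have h := isTwoCocycle_iff.mp hf (σ ^ i) (σ ^ k) σ
    rw [← pow_succ, ← pow_add, ih] at h
    simp only [powCoboundary, ← add_assoc, betaHom_succ] at h ⊢
    rw [Units.ext_iff] at h ⊢
    simp only [Units.val_mul, Units.val_inv_eq_inv_val, map_mul, map_inv] at h ⊢
    field_simp at h ⊢
    linear_combination h

lemma eq_mul_unitsAct_of_eq_powCoboundary {n : ℕ} (hσ : σ ^ n = 1) {f : G → G → Fˣ}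
    {ρ : ℕ → Fˣ} (h : ∀ i k, f (σ ^ i) (σ ^ k) = powCoboundary η σ ρ i k) (i : ℕ) :
    ρ (i + n) = ρ i * unitsAct η (σ ^ i) (ρ n * (ρ 0)⁻¹) := by
  have h' : powCoboundary η σ ρ i n = powCoboundary η σ ρ i 0 := by
    rw [← h, ← h, hσ, pow_zero]
  simp only [powCoboundary, add_zero] at h'
  rw [Units.ext_iff] at h' ⊢
  simp only [Units.val_mul, Units.val_inv_eq_inv_val, map_mul, map_inv] at h' ⊢
  field_simp at h' ⊢
  linear_combination -h'

lemma exists_lt_orderOf_pow_eq (hgen : ∀ g : G, g ∈ Subgroup.zpowers σ) (hσ : 0 < orderOf σ)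
    (g : G) : ∃ i < orderOf σ, σ ^ i = g := by
  obtain ⟨k, rfl⟩ := (orderOf_pos_iff.mp hσ).mem_powers_iff_mem_zpowers.mpr (hgen g)
  exact ⟨k % orderOf σ, Nat.mod_lt k hσ, pow_mod_orderOf σ k⟩

lemma exists_apply_pow_eq_of_periodic {α : Type*} (hgen : ∀ g : G, g ∈ Subgroup.zpowers σ)
    (hσ : 0 < orderOf σ) {ρ : ℕ → α} (hρ : Function.Periodic ρ (orderOf σ)) :
    ∃ r : G → α, ∀ i, r (σ ^ i) = ρ i := by
  choose e he using exists_lt_orderOf_pow_eq hgen hσ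
  refine ⟨ρ ∘ e, fun i ↦ ?_⟩
  have hmod : e (σ ^ i) % orderOf σ = i % orderOf σ := pow_eq_pow_iff_modEq.mp (he _).2
  rw [Function.comp_apply, ← hρ.map_mod_nat, hmod, hρ.map_mod_nat]

lemma isTwoCoboundary_of_eq_powCoboundary (hgen : ∀ g : G, g ∈ Subgroup.zpowers σ)
    (hσ : 0 < orderOf σ) {f : G → G → Fˣ} {ρ : ℕ → Fˣ}
    (hρ : Function.Periodic ρ (orderOf σ))
    (h : ∀ i k, f (σ ^ i) (σ ^ k) = powCoboundary η σ ρ i k) : IsTwoCoboundary η f := by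
  obtain ⟨r, hr⟩ := exists_apply_pow_eq_of_periodic hgen hσ hρ
  refine isTwoCoboundary_iff.mpr ⟨r, fun g g' ↦ ?_⟩
  obtain ⟨i, -, rfl⟩ := exists_lt_orderOf_pow_eq hgen hσ g
  obtain ⟨k, -, rfl⟩ := exists_lt_orderOf_pow_eq hgen hσ g'
  rw [← pow_add, hr, hr, hr, h]
  rfl

lemma isTwoCoboundary_of_betaHom_eq (hgen : ∀ g : G, g ∈ Subgroup.zpowers σ) {n : ℕ}
    (hn : 0 < n) (hord : orderOf σ = n) {f : G → G → Fˣ} (hf : IsTwoCocycle η f) {x : Fˣ}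
    (hx : betaHom σ n f = cyclicNormHom η σ n x) : IsTwoCoboundary η f := by
  set ρ : ℕ → Fˣ := fun m ↦ f 1 1 * (betaHom σ m f)⁻¹ * cyclicNormHom η σ m x
  have hρ : ∀ i k, f (σ ^ i) (σ ^ k) = powCoboundary η σ ρ i k := by
    intro i k
    rw [hf.eq_powCoboundary, ← powCoboundary_mul_of_add_eq
      (X := fun m ↦ cyclicNormHom η σ m x) (cyclicNormHom_add η σ x)]
    rfl
  have hρn : ρ n = ρ 0 := by
    simp only [ρ, hx, betaHom_zero, cyclicNormHom_apply, Finset.range_zero, Finset.prod_empty,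
      MonoidHom.one_apply, inv_one, mul_one, inv_mul_cancel_right]
  have hσ : σ ^ n = 1 := hord ▸ pow_orderOf_eq_one σ
  refine isTwoCoboundary_of_eq_powCoboundary hgen (hord ▸ hn) (fun i ↦ ?_) hρ
  rw [hord, eq_mul_unitsAct_of_eq_powCoboundary hσ hρ, hρn, mul_inv_cancel, map_one, mul_one]

lemma betaHom_eq_cyclicNormHom_of_isTwoCoboundary {n : ℕ} (hσ : σ ^ n = 1)
    {f : G → G → Fˣ} (hf : IsTwoCoboundary η f) :
    ∃ x, betaHom σ n f = cyclicNormHom η σ n x := by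
  obtain ⟨r, hr⟩ := isTwoCoboundary_iff.mp hf
  refine ⟨r σ, ?_⟩
  have htel : ∏ i ∈ Finset.range n, r (σ ^ i) / r (σ ^ (i + 1)) = 1 := by
    rw [Finset.prod_range_div' (fun i ↦ r (σ ^ i)), hσ, pow_zero, div_self']
  calc betaHom σ n f
      = ∏ i ∈ Finset.range n, unitsAct η (σ ^ i) (r σ) * (r (σ ^ i) / r (σ ^ (i + 1))) := by
        rw [betaHom_apply]
        refine Finset.prod_congr rfl fun i _ ↦ ?_
        rw [hr, pow_succ, div_eq_mul_inv]
        ac_rfl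
    _ = cyclicNormHom η σ n (r σ) := by
        rw [Finset.prod_mul_distrib, htel, mul_one, cyclicNormHom_apply]

lemma isTwoCoboundary_iff_betaHom_mem_range (hgen : ∀ g : G, g ∈ Subgroup.zpowers σ) {n : ℕ}
    (hn : 0 < n) (hord : orderOf σ = n) {f : G → G → Fˣ} (hf : IsTwoCocycle η f) :
    IsTwoCoboundary η f ↔ betaHom σ n f ∈ (cyclicNormHom η σ n).range := by
  refine ⟨fun hcob ↦ ?_, fun ⟨x, hx⟩ ↦ isTwoCoboundary_of_betaHom_eq hgen hn hord hf hx.symm⟩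
  obtain ⟨x, hx⟩ := betaHom_eq_cyclicNormHom_of_isTwoCoboundary (hord ▸ pow_orderOf_eq_one σ) hcob
  exact ⟨x, hx.symm⟩

lemma betaHom_mem_fixedUnits (hgen : ∀ g : G, g ∈ Subgroup.zpowers σ) {n : ℕ} (hσ : σ ^ n = 1)
    {f : G → G → Fˣ} (hf : IsTwoCocycle η f) : betaHom σ n f ∈ fixedUnits η := by
  refine mem_fixedUnits_of_generator hgen ?_
  -- For the `ρ` of `eq_powCoboundary`, `ρ (n + 1) / ρ 1 = β⁻¹`, so the shift formula reads
  -- `β⁻¹ = σ(β⁻¹)`.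
  have h := eq_mul_unitsAct_of_eq_powCoboundary hσ (hf.eq_powCoboundary (σ := σ)) 1
  rw [add_comm, betaHom_succ, hσ, betaHom_succ, betaHom_zero] at h
  simp only [pow_zero, pow_one, MonoidHom.one_apply, one_mul, inv_one, mul_one] at h
  rw [mul_inv_cancel_comm, map_inv, mul_inv_rev, ← mul_assoc] at h
  exact inv_injective (mul_left_cancel h).symm

lemma cohomologous_iff_betaHom_mem_range (hgen : ∀ g : G, g ∈ Subgroup.zpowers σ) {n : ℕ}
    (hn : 0 < n) (hord : orderOf σ = n) {f₁ f₂ : G → G → Fˣ} (h₁ : IsTwoCocycle η f₁)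
    (h₂ : IsTwoCocycle η f₂) :
    Cohomologous η f₁ f₂ ↔
      (betaHom σ n f₁)⁻¹ * betaHom σ n f₂ ∈ (cyclicNormHom η σ n).range := by
  have hcoc : IsTwoCocycle η (f₁ * f₂⁻¹) := (twoCocycles η).mul_mem h₁ ((twoCocycles η).inv_mem h₂)
  rw [← inv_mem_iff, mul_inv_rev, inv_inv, mul_comm, ← map_inv, ← map_mul]
  exact isTwoCoboundary_iff_betaHom_mem_range hgen hn hord hcoc

lemma index_eq_mod {n : ℕ} (hord : orderOf σ = n) {e : G → ℕ}
    (he : ∀ g, e g < n ∧ σ ^ e g = g) {k : ℕ} : e (σ ^ k) = k % n :=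
  calc e (σ ^ k) = e (σ ^ k) % n := (Nat.mod_eq_of_lt (he _).1).symm
    _ = k % n := hord ▸ pow_eq_pow_iff_modEq.mp (he _).2

lemma index_mul {n : ℕ} (hord : orderOf σ = n) {e : G → ℕ} (he : ∀ g, e g < n ∧ σ ^ e g = g)
    (g h : G) : e (g * h) = (e g + e h) % n := by
  conv_lhs => rw [← (he g).2, ← (he h).2, ← pow_add]
  exact index_eq_mod hord he

def carryCocycle {G M : Type*} [Monoid M] (n : ℕ) (e : G → ℕ) (u : M) (g h : G) : M :=
  u ^ ((e g + e h) / n)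

lemma isTwoCocycle_carryCocycle {n : ℕ} (hn : 0 < n) (hord : orderOf σ = n) {e : G → ℕ}
    (he : ∀ g, e g < n ∧ σ ^ e g = g) {u : Fˣ} (hu : u ∈ fixedUnits η) :
    IsTwoCocycle η (carryCocycle n e u) := by
  refine isTwoCocycle_iff.mpr fun g h k ↦ ?_
  have hfix (m : ℕ) : unitsAct η g (u ^ m) = u ^ m := by
    rw [map_pow, unitsAct_eq_of_mem_fixedUnits η hu]
  simp only [carryCocycle, hfix, ← pow_add]
  congr 1
  have hcarry (a b : G) : e (a * b) + n * ((e a + e b) / n) = e a + e b := by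
    rw [index_mul hord he]; exact Nat.mod_add_div _ _
  have hcarry' := hcarry (g * h) k
  rw [mul_assoc] at hcarry'
  apply Nat.eq_of_mul_eq_mul_left hn
  linarith [hcarry g h, hcarry h k, hcarry g (h * k)]

lemma betaHom_carryCocycle {n : ℕ} (hn : 0 < n) (hord : orderOf σ = n) {e : G → ℕ}
    (he : ∀ g, e g < n ∧ σ ^ e g = g) (u : Fˣ) :
    betaHom σ n (carryCocycle n e u) = u ^ e σ := by
  simp only [betaHom_apply, carryCocycle, Finset.prod_pow_eq_pow_sum]
  congr 1
  have hcarry (i : ℕ) : e (σ ^ (i + 1)) + n * ((e (σ ^ i) + e σ) / n) = e (σ ^ i) + e σ := by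
    rw [pow_succ, index_mul hord he]; exact Nat.mod_add_div _ _
  have hshift : ∑ i ∈ Finset.range n, e (σ ^ (i + 1)) = ∑ i ∈ Finset.range n, e (σ ^ i) := by
    have h := (Finset.sum_range_succ' (fun i ↦ e (σ ^ i)) n).symm.trans
      (Finset.sum_range_succ (fun i ↦ e (σ ^ i)) n)
    simpa only [hord ▸ pow_orderOf_eq_one σ, pow_zero, add_left_inj] using h
  apply Nat.eq_of_mul_eq_mul_left hn
  have hsum := Finset.sum_congr rfl fun i (_ : i ∈ Finset.range n) ↦ hcarry i
  rw [Finset.sum_add_distrib, Finset.sum_add_distrib, hshift, ← Finset.mul_sum,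
    Finset.sum_const, Finset.card_range, smul_eq_mul] at hsum
  linarith

lemma exists_isTwoCocycle_betaHom_mem (hgen : ∀ g : G, g ∈ Subgroup.zpowers σ) {n : ℕ}
    (hn : 0 < n) (hord : orderOf σ = n) {u : Fˣ} (hu : u ∈ fixedUnits η) :
    ∃ f, IsTwoCocycle η f ∧ (betaHom σ n f)⁻¹ * u ∈ (cyclicNormHom η σ n).range := by
  choose e he using exists_lt_orderOf_pow_eq hgen (hord ▸ hn)
  rw [hord] at he
  have heσ : e σ = 1 % n := by
    simpa using index_eq_mod hord he (k := 1)
  -- `u = u ^ (1 % n) * (u ^ n) ^ (1 / n)`, and `u ^ n = N u` since `u` is fixed.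
  refine ⟨carryCocycle n e u, isTwoCocycle_carryCocycle hn hord he hu, u ^ (1 / n), ?_⟩
  rw [betaHom_carryCocycle hn hord he, cyclicNormHom_eq_pow η (pow_mem hu _), heσ, ← pow_mul,
    eq_inv_mul_iff_mul_eq, ← pow_add, Nat.mod_add_div', pow_one]

variable (η) in
def betaToQuotient (hgen : ∀ g : G, g ∈ Subgroup.zpowers σ) {n : ℕ} (hσ : σ ^ n = 1) :
    twoCocycles η →* fixedUnits η ⧸ (cyclicNormHom η σ n).range.subgroupOf (fixedUnits η) :=
  (QuotientGroup.mk' _).comp <| ((betaHom σ n).comp (twoCocycles η).subtype).codRestrict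
    (fixedUnits η) fun f ↦ betaHom_mem_fixedUnits hgen hσ f.2

lemma ker_betaToQuotient (hgen : ∀ g : G, g ∈ Subgroup.zpowers σ) {n : ℕ} (hn : 0 < n)
    (hord : orderOf σ = n) (hσ : σ ^ n = 1) :
    (betaToQuotient η hgen hσ).ker = (twoCoboundaries η).subgroupOf (twoCocycles η) := by
  ext ⟨f, hf⟩
  rw [MonoidHom.mem_ker, betaToQuotient, MonoidHom.comp_apply, QuotientGroup.mk'_apply,
    QuotientGroup.eq_one_iff, Subgroup.mem_subgroupOf, Subgroup.mem_subgroupOf]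
  exact (isTwoCoboundary_iff_betaHom_mem_range hgen hn hord hf).symm

lemma betaToQuotient_surjective (hgen : ∀ g : G, g ∈ Subgroup.zpowers σ) {n : ℕ} (hn : 0 < n)
    (hord : orderOf σ = n) (hσ : σ ^ n = 1) :
    Function.Surjective (betaToQuotient η hgen hσ) := by
  intro q
  obtain ⟨⟨u, hu⟩, rfl⟩ := QuotientGroup.mk_surjective q
  obtain ⟨f, hf, hβ⟩ := exists_isTwoCocycle_betaHom_mem hgen hn hord hu
  exact ⟨⟨f, hf⟩, QuotientGroup.eq.mpr hβ⟩

end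

/-- for a cyclic group `C_n = ⟨σ⟩` of order `n` acting on a field `F`, two
2-cocycles `f₁, f₂` are cohomologous iff `β_{f₁}⁻¹ · β_{f₂}` lies in the image of the
norm map, where `β_f = ∏_{i=0}^{n-1} f(σ^i,σ)`; consequently `f ↦ β_f` induces a group
isomorphism `H²_η(C_n, F^*) ≅ (F^*)^{C_n} / N(F^*)`. -/
theorem cohomologous_iff_norm_and_H2_iso {G F : Type*} [Group G] [Field F]
    (n : ℕ) (hn : 0 < n) (σ : G)
    (hgen : ∀ g : G, g ∈ Subgroup.zpowers σ) (hord : orderOf σ = n)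
    (η : G →* RingAut F) :
    (∀ f₁ f₂ : G → G → Fˣ, IsTwoCocycle η f₁ → IsTwoCocycle η f₂ →
      (Cohomologous η f₁ f₂ ↔
        (∏ i ∈ Finset.range n, f₁ (σ ^ i) σ)⁻¹ * (∏ i ∈ Finset.range n, f₂ (σ ^ i) σ) ∈
          (cyclicNormHom η σ n).range)) ∧
    (∃ Φ : H2 η ≃*
        (fixedUnits η ⧸ ((cyclicNormHom η σ n).range.subgroupOf (fixedUnits η))),
      ∀ (f : G → G → Fˣ) (hf : f ∈ twoCocycles η)
        (hβ : (∏ i ∈ Finset.range n, f (σ ^ i) σ) ∈ fixedUnits η),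
        Φ (QuotientGroup.mk ⟨f, hf⟩) =
          QuotientGroup.mk ⟨∏ i ∈ Finset.range n, f (σ ^ i) σ, hβ⟩) := by
  have hσ : σ ^ n = 1 := hord ▸ pow_orderOf_eq_one σ
  refine ⟨fun f₁ f₂ ↦ cohomologous_iff_betaHom_mem_range hgen hn hord, ?_⟩
  refine ⟨(QuotientGroup.quotientMulEquivOfEq (ker_betaToQuotient hgen hn hord hσ).symm).trans
    (QuotientGroup.quotientKerEquivOfSurjective _ (betaToQuotient_surjective hgen hn hord hσ)),
    fun f hf hβ ↦ ?_⟩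
  rw [MulEquiv.trans_apply, QuotientGroup.quotientMulEquivOfEq_mk]
  rfl
end

section
/- Let q be a prime, let F_{q^r} be the field with q^r elements with Frobenius automorphism φ : x ↦ x^q, let k divide r and r/k divide n, and let the cyclic group C_n = ⟨σ⟩ act on F_{q^r} via η(σ) = φ^k. Then: (1) the elements of F_{q^r}^* fixed by this action form exactly the multiplicative group F_{q^k}^* of the subfield with q^k elements, a cyclic group of order q^k − 1; (2) for every x ∈ F_{q^r}^*, the norm N(x) = ∏_{i=0}^{n-1} σ^i(x) equals x^{((q^r−1)/(q^k−1)) · (nk/r)}; and (3) the image of the norm map is the subgroup of F_{q^k}^* of index gcd(q^k − 1, nk/r). -/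
open Finset

theorem Function.Periodic.prod_range_mul {M : Type*} [CommMonoid M] {f : ℕ → M} {m : ℕ}
    (hf : Function.Periodic f m) (t : ℕ) :
    ∏ i ∈ range (m * t), f i = (∏ i ∈ range m, f i) ^ t := by
  induction t with
  | zero => simp
  | succ t ih =>
    rw [Nat.mul_succ, prod_range_add, ih, pow_succ]
    refine congrArg _ (prod_congr rfl fun i _ => ?_)
    rw [add_comm, mul_comm, ← Nat.cast_id t]
    exact hf.nat_mul t i

theorem range_powMonoidHom_mul_le_ker_powMonoidHom {G : Type*} [CommGroup G] {a b : ℕ}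
    (h : Nat.card G ∣ a * b) (t : ℕ) :
    (powMonoidHom (a * t) : G →* G).range ≤ (powMonoidHom b).ker := by
  rintro _ ⟨x, rfl⟩
  rw [MonoidHom.mem_ker, powMonoidHom_apply, powMonoidHom_apply, ← pow_mul]
  exact orderOf_dvd_iff_pow_eq_one.mp
    ((orderOf_dvd_natCard x).trans (h.trans (Dvd.intro t (by ring))))

theorem IsCyclic.relIndex_range_powMonoidHom_ker {G : Type*} [CommGroup G] [IsCyclic G]
    [Finite G] {a b : ℕ} (hcard : Nat.card G = a * b) (t : ℕ) :
    (powMonoidHom (a * t) : G →* G).range.relIndex (powMonoidHom b).ker = Nat.gcd b t := by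
  have ha : 0 < a := Nat.pos_of_mul_pos_right (hcard ▸ Nat.card_pos)
  have hb : 0 < b := Nat.pos_of_mul_pos_left (hcard ▸ Nat.card_pos)
  have hrel :=
    Subgroup.relIndex_mul_index (range_powMonoidHom_mul_le_ker_powMonoidHom hcard.dvd t)
  rw [IsCyclic.index_powMonoidHom_ker, IsCyclic.index_powMonoidHom_range, hcard,
    Nat.gcd_eq_right (dvd_mul_left b a), Nat.mul_div_cancel _ hb, Nat.gcd_mul_left] at hrel
  exact Nat.eq_of_mul_eq_mul_right ha (hrel.trans (mul_comm _ _))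

theorem RingAut.pow_apply_eq_pow {R : Type*} [Semiring R] {f : RingAut R} {e : ℕ}
    (hf : ∀ x, f x = x ^ e) (i : ℕ) (x : R) : (f ^ i) x = x ^ e ^ i := by
  rw [RingAut.coe_pow, show ⇑f = (fun x : R => x ^ e) from funext hf, pow_iterate]

section CyclicAction

variable {G F : Type*} [Group G] [Field F] {η : G →* RingAut F} {σ : G}

theorem mem_fixedUnits_iff_of_forall_mem_zpowers (hgen : ∀ g : G, g ∈ Subgroup.zpowers σ)
    (x : Fˣ) : x ∈ fixedUnits η ↔ η σ x = x := by
  refine ⟨fun hx => hx σ, fun hx g => ?_⟩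
  obtain ⟨j, rfl⟩ := hgen g
  have hσ : σ ∈ (MulAction.stabilizer (RingAut F) (x : F)).comap η := hx
  exact Subgroup.zpow_mem _ hσ j

theorem fixedUnits_eq_ker_powMonoidHom {e : ℕ} (he : 0 < e)
    (hgen : ∀ g : G, g ∈ Subgroup.zpowers σ) (hη : ∀ x : F, η σ x = x ^ e) :
    fixedUnits η = (powMonoidHom (e - 1) : Fˣ →* Fˣ).ker := by
  obtain ⟨d, rfl⟩ := Nat.exists_eq_add_of_lt he
  ext x
  rw [mem_fixedUnits_iff_of_forall_mem_zpowers hgen, hη, MonoidHom.mem_ker, powMonoidHom_apply,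
    ← Units.val_pow_eq_pow_val, Units.val_inj, zero_add, Nat.add_sub_cancel, pow_succ,
    mul_eq_right]

theorem cyclicNormHom_apply_eq_prod {e : ℕ} (hη : ∀ x : F, η σ x = x ^ e) (n : ℕ) (x : Fˣ) :
    cyclicNormHom η σ n x = ∏ i ∈ range n, x ^ e ^ i := by
  change ∏ i ∈ range n, Units.map (η (σ ^ i)).toMonoidHom x = _
  refine prod_congr rfl fun i _ => Units.ext ?_
  rw [Units.coe_map, map_pow, Units.val_pow_eq_pow_val]
  exact RingAut.pow_apply_eq_pow hη i x

theorem cyclicNormHom_mul_eq_powMonoidHom [Fintype F] {e m : ℕ} (he : 2 ≤ e)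
    (hF : Fintype.card F = e ^ m) (hη : ∀ x : F, η σ x = x ^ e) (t : ℕ) :
    cyclicNormHom η σ (m * t) = powMonoidHom ((e ^ m - 1) / (e - 1) * t) := by
  ext1 x
  have hx : x ^ e ^ m = x :=
    Units.ext (by rw [Units.val_pow_eq_pow_val, ← hF, FiniteField.pow_card])
  have hperiodic : Function.Periodic (fun i => x ^ e ^ i) m := fun i => by
    simp only [pow_add, mul_comm (e ^ i), pow_mul, hx]
  rw [cyclicNormHom_apply_eq_prod hη, hperiodic.prod_range_mul, prod_pow_eq_pow_sum,
    Nat.geomSum_eq he, powMonoidHom_apply, pow_mul]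

end CyclicAction

theorem frobenius_fixed_and_norm_general {G F : Type*} [Group G] [Field F] [Fintype F]
    (q r k n : ℕ) (hq : q.Prime) (hr : 0 < r) (hk : 0 < k)
    (hkr : k ∣ r) (hrkn : r / k ∣ n)
    (hF : Fintype.card F = q ^ r)
    (σ : G) (hgen : ∀ g : G, g ∈ Subgroup.zpowers σ)
    (η : G →* RingAut F) (hη : ∀ x : F, η σ x = x ^ q ^ k) :
    (∀ x : Fˣ, x ∈ fixedUnits η ↔ (x : F) ^ q ^ k = (x : F)) ∧
    Nat.card (fixedUnits η) = q ^ k - 1 ∧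
    IsCyclic (fixedUnits η) ∧
    (∀ x : Fˣ, cyclicNormHom η σ n x = x ^ ((q ^ r - 1) / (q ^ k - 1) * (n * k / r))) ∧
    (cyclicNormHom η σ n).range ≤ fixedUnits η ∧
    (cyclicNormHom η σ n).range.relIndex (fixedUnits η) =
      Nat.gcd (q ^ k - 1) (n * k / r) := by
  obtain ⟨m, rfl⟩ := hkr
  rw [Nat.mul_div_cancel_left m hk] at hrkn
  obtain ⟨t, rfl⟩ := hrkn
  have hq2 : 2 ≤ q ^ k := hq.two_le.trans (Nat.le_self_pow hk.ne' q)
  have hnk : m * t * k / (k * m) = t := by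
    rw [mul_right_comm, mul_comm m k, Nat.mul_div_cancel_left t hr]
  have hcard : Nat.card Fˣ = (q ^ (k * m) - 1) / (q ^ k - 1) * (q ^ k - 1) := by
    classical
    rw [Nat.card_eq_fintype_card, Fintype.card_units, hF,
      Nat.div_mul_cancel (Nat.pow_sub_one_dvd_pow_sub_one q (dvd_mul_right k m))]
  have hfix := fixedUnits_eq_ker_powMonoidHom (by lia) hgen hη
  have hnorm := cyclicNormHom_mul_eq_powMonoidHom hq2 (hF.trans (pow_mul q k m)) hη t
  rw [← pow_mul] at hnorm
  refine ⟨fun x => (mem_fixedUnits_iff_of_forall_mem_zpowers hgen x).trans (by rw [hη]),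
    ?_, inferInstance, fun x => by rw [hnorm, hnk, powMonoidHom_apply], ?_⟩
  · rw [hfix, IsCyclic.card_powMonoidHom_ker, hcard, Nat.gcd_eq_right (dvd_mul_left _ _)]
  · rw [hfix, hnorm, hnk]
    exact ⟨range_powMonoidHom_mul_le_ker_powMonoidHom hcard.dvd t,
      IsCyclic.relIndex_range_powMonoidHom_ker hcard t⟩

/-- let the cyclic group `C_n = ⟨σ⟩` act on the field `F = F_{q^r}` with
`q^r` elements via `η(σ) = φ^k` (`φ` the Frobenius, `k ∣ r`, `(r/k) ∣ n`). Then (1) the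
fixed elements of `F^*` form exactly the multiplicative group of the subfield with
`q^k` elements, a cyclic group of order `q^k - 1`; (2) the norm of `x` equals
`x^{((q^r-1)/(q^k-1))·(nk/r)}`; (3) the image of the norm map is the subgroup of
`F_{q^k}^*` of index `gcd(q^k - 1, nk/r)`. -/
theorem frobenius_fixed_and_norm {G F : Type*} [Group G] [Field F] [Fintype F]
    (q r k n : ℕ) (hq : q.Prime) (hr : 0 < r) (hk : 0 < k) (hn : 0 < n)
    (hkr : k ∣ r) (hrkn : r / k ∣ n)
    (hF : Fintype.card F = q ^ r)
    (σ : G) (hgen : ∀ g : G, g ∈ Subgroup.zpowers σ) (hord : orderOf σ = n)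
    (η : G →* RingAut F) (hη : ∀ x : F, η σ x = x ^ q ^ k) :
    (∀ x : Fˣ, x ∈ fixedUnits η ↔ (x : F) ^ q ^ k = (x : F)) ∧
    Nat.card (fixedUnits η) = q ^ k - 1 ∧
    IsCyclic (fixedUnits η) ∧
    (∀ x : Fˣ, cyclicNormHom η σ n x = x ^ ((q ^ r - 1) / (q ^ k - 1) * (n * k / r))) ∧
    (cyclicNormHom η σ n).range ≤ fixedUnits η ∧
    (cyclicNormHom η σ n).range.relIndex (fixedUnits η) =
      Nat.gcd (q ^ k - 1) (n * k / r) :=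
  frobenius_fixed_and_norm_general q r k n hq hr hk hkr hrkn hF σ hgen η hη
end

section
/- Let q be a prime, let F_{q^r} be the field with q^r elements with Frobenius automorphism φ : x ↦ x^q, let k divide r and r/k divide n, and let the cyclic group C_n = ⟨σ⟩ act on F_{q^r} via η(σ) = φ^k. For j coprime to n, let ψ_j be the automorphism of C_n sending σ^i to σ^{ij}. Then ψ_j satisfies η ∘ ψ_j = η if and only if j ≡ 1 (mod r/k). Consequently, the subgroup Aut_η(C_n) = {ψ ∈ Aut(C_n) : η ∘ ψ = η} of Aut(C_n) has order φ(n)/φ(r/k), where φ denotes Euler's totient function. -/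
/-!
`η σ` is the `k`-th power of the Frobenius, and `x ↦ x ^ q ^ m` is the identity of `F_{q^r}` iff
`q ^ r - 1 ∣ q ^ m - 1`, i.e. iff `r ∣ m`; so `η σ` has order `r / k`. Since `C_n` is generated by
`σ`, an automorphism `ψ : σ ↦ σ ^ j` is `η`-compatible iff `η σ ^ j = η σ`, i.e. iff
`j ≡ 1 (mod r / k)`. Under `Aut(C_n) ≅ (ℤ/n)ˣ` the compatible automorphisms thus form the kernel of
the surjective reduction `(ℤ/n)ˣ → (ℤ/(r/k))ˣ`, which has order `φ(n)/φ(r/k)`.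
-/

/-- The subgroup `Aut_η(G)` of `η`-compatible automorphisms of `G`. -/
def compatAut {G F : Type*} [Group G] [Field F] (η : G →* RingAut F) :
    Subgroup (MulAut G) where
  carrier := {ψ | ∀ g : G, η (ψ g) = η g}
  one_mem' := fun _ => rfl
  mul_mem' := by
    intro a b ha hb g
    exact (ha (b g)).trans (hb g)
  inv_mem' := by
    intro a ha g
    have h := ha (a⁻¹ g)
    rw [show a (a⁻¹ g) = g from a.apply_symm_apply g] at h
    exact h.symm

theorem Nat.pow_sub_one_dvd_pow_sub_one_iff {q a b : ℕ} (hq : 1 < q) :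
    q ^ a - 1 ∣ q ^ b - 1 ↔ a ∣ b := by
  rw [← Nat.gcd_eq_left_iff_dvd, ← Nat.gcd_eq_left_iff_dvd, Nat.pow_sub_one_gcd_pow_sub_one]
  refine ⟨fun h => Nat.pow_right_injective hq ?_, fun h => by rw [h]⟩
  exact Nat.sub_one_cancel (Nat.pow_pos (by omega)) (Nat.pow_pos (by omega)) h

theorem forall_pow_succ_eq_self_iff {M₀ : Type*} [GroupWithZero M₀] (N : ℕ) :
    (∀ x : M₀, x ^ (N + 1) = x) ↔ ∀ u : M₀ˣ, u ^ N = 1 := by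
  constructor
  · intro h u
    ext
    simpa [pow_succ, mul_eq_right₀ u.ne_zero] using h u
  · intro h x
    rcases eq_or_ne x 0 with rfl | hx
    · exact zero_pow N.succ_ne_zero
    · rw [pow_succ, mul_eq_right₀ hx]
      simpa using congr_arg Units.val (h (Units.mk0 x hx))

namespace FiniteField

variable {F : Type*} [Field F] [Fintype F] {q r : ℕ}

theorem forall_pow_pow_eq_self_iff (hq : 1 < q) (hF : Fintype.card F = q ^ r) (m : ℕ) :
    (∀ x : F, x ^ q ^ m = x) ↔ r ∣ m := by
  have hN : q ^ m - 1 + 1 = q ^ m := Nat.sub_add_cancel (Nat.one_le_pow m q (by omega))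
  rw [← hN, forall_pow_succ_eq_self_iff, forall_pow_eq_one_iff, hF,
    Nat.pow_sub_one_dvd_pow_sub_one_iff hq]

theorem orderOf_eq_div_of_apply_eq_pow_pow {k : ℕ} (hq : 1 < q) (hF : Fintype.card F = q ^ r)
    (hk : 0 < k) (hkr : k ∣ r) {f : RingAut F} (hf : ∀ x, f x = x ^ q ^ k) :
    orderOf f = r / k := by
  obtain ⟨d, rfl⟩ := hkr
  have hpow_eq_one : ∀ m, f ^ m = 1 ↔ d ∣ m := fun m => by
    have hfm : ⇑(f ^ m) = fun x => x ^ q ^ (k * m) := by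
      rw [RingAut.coe_pow, funext hf, pow_iterate, pow_mul]
    rw [DFunLike.ext_iff, hfm]
    simp only [RingAut.one_apply]
    rw [forall_pow_pow_eq_self_iff hq hF, Nat.mul_dvd_mul_iff_left hk]
  rw [Nat.mul_div_cancel_left d hk]
  exact Nat.dvd_antisymm (orderOf_dvd_of_pow_eq_one ((hpow_eq_one d).mpr dvd_rfl))
    ((hpow_eq_one _).mp (pow_orderOf_eq_one f))

end FiniteField

theorem IsCyclic.apply_eq_pow_val_mulAutMulEquiv {G : Type*} [Group G] [hG : IsCyclic G]
    [Finite G] (ψ : MulAut G) (g : G) :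
    ψ g = g ^ (mulAutMulEquiv G ψ : ZMod (Nat.card G)).val := by
  set ζ := zmodCyclicMulEquiv hG
  set u := mulAutMulEquiv G ψ
  -- `mulAutMulEquiv` is built by transporting `ψ` along `ζ` to multiplication by `u`.
  have hψ : ψ g = ζ (.ofAdd ((u : ZMod (Nat.card G)) * (ζ.symm g).toAdd)) := by
    conv_lhs => rw [← (mulAutMulEquiv G).symm_apply_apply ψ]
    rfl
  rw [hψ, ← ZMod.natCast_zmod_val (u : ZMod (Nat.card G)), ← nsmul_eq_mul, ofAdd_nsmul, map_pow]
  simp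

theorem MonoidHom.card_ker_mul_card_of_surjective {G G' : Type*} [Group G] [Group G']
    {f : G →* G'} (hf : Function.Surjective f) : Nat.card f.ker * Nat.card G' = Nat.card G := by
  rw [← Subgroup.card_mul_index f.ker, Subgroup.index_ker, MonoidHom.range_eq_top.mpr hf,
    Subgroup.card_top]

section compatAut

variable {G F : Type*} [Group G] [Field F] {σ : G} (η : G →* RingAut F)

theorem mem_compatAut_iff_modEq (hgen : ∀ g : G, g ∈ Subgroup.zpowers σ) {ψ : MulAut G} {j : ℕ}
    (hψ : ψ σ = σ ^ j) : ψ ∈ compatAut η ↔ j ≡ 1 [MOD orderOf (η σ)] := by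
  have hcomp : ψ ∈ compatAut η ↔ η.comp ψ.toMonoidHom = η := by rw [DFunLike.ext_iff]; rfl
  rw [hcomp, MonoidHom.eq_iff_eq_on_generator hgen, ← pow_eq_pow_iff_modEq, pow_one]
  simp [hψ]

theorem card_compatAut [Finite G] (hgen : ∀ g : G, g ∈ Subgroup.zpowers σ) :
    Nat.card (compatAut η) = Nat.totient (orderOf σ) / Nat.totient (orderOf (η σ)) := by
  have : IsCyclic G := ⟨σ, hgen⟩
  have hσ : orderOf σ = Nat.card G := orderOf_eq_card_of_forall_mem_zpowers hgen
  have hd : orderOf (η σ) ∣ Nat.card G := hσ ▸ orderOf_map_dvd η σ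
  have : NeZero (Nat.card G) := ⟨Nat.card_pos.ne'⟩
  have : NeZero (orderOf (η σ)) := ⟨(Nat.pos_of_dvd_of_pos hd Nat.card_pos).ne'⟩
  let ρ := (ZMod.unitsMap hd).comp (IsCyclic.mulAutMulEquiv G).toMonoidHom
  have hρ : Function.Surjective ρ :=
    (ZMod.unitsMap_surjective hd).comp (IsCyclic.mulAutMulEquiv G).surjective
  have hker : compatAut η = ρ.ker := by
    ext ψ
    rw [mem_compatAut_iff_modEq η hgen (IsCyclic.apply_eq_pow_val_mulAutMulEquiv ψ σ),
      MonoidHom.mem_ker, ← Units.val_inj, MonoidHom.comp_apply, MulEquiv.coe_toMonoidHom,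
      ZMod.unitsMap_val, ZMod.cast_eq_val, Units.val_one]
    exact_mod_cast (ZMod.natCast_eq_natCast_iff _ 1 _).symm
  have hmul := MonoidHom.card_ker_mul_card_of_surjective hρ
  rw [IsCyclic.card_mulAut, Nat.card_eq_fintype_card (α := (ZMod (orderOf (η σ)))ˣ),
    ZMod.card_units_eq_totient] at hmul
  rw [hker, hσ, ← hmul, Nat.mul_div_cancel _ (Nat.totient_pos.mpr (NeZero.pos _))]

end compatAut

theorem compatAut_iff_and_card_general {G F : Type*} [Group G] [Field F] [Fintype F]
    (q r k n : ℕ) (hq : q.Prime) (hk : 0 < k) (hn : 0 < n)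
    (hkr : k ∣ r)
    (hF : Fintype.card F = q ^ r)
    (σ : G) (hgen : ∀ g : G, g ∈ Subgroup.zpowers σ) (hord : orderOf σ = n)
    (η : G →* RingAut F) (hη : ∀ x : F, η σ x = x ^ q ^ k) :
    (∀ j : ℕ, Nat.gcd j n = 1 → ∀ ψ : MulAut G, ψ σ = σ ^ j →
      (ψ ∈ compatAut η ↔ j ≡ 1 [MOD r / k])) ∧
    Nat.card (compatAut η) = Nat.totient n / Nat.totient (r / k) := by
  have hησ : orderOf (η σ) = r / k :=
    FiniteField.orderOf_eq_div_of_apply_eq_pow_pow hq.one_lt hF hk hkr hη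
  refine ⟨fun j _ ψ hψ => hησ ▸ mem_compatAut_iff_modEq η hgen hψ, ?_⟩
  have hcard : Nat.card G = n := by
    rw [← hord, ← Nat.card_zpowers, (Subgroup.eq_top_iff' _).mpr hgen, Subgroup.card_top]
  have : Finite G := Nat.finite_of_card_ne_zero (hcard ▸ hn.ne')
  rw [card_compatAut η hgen, hord, hησ]

/-- let the cyclic group `C_n = ⟨σ⟩` act on `F = F_{q^r}` via
`η(σ) = φ^k`. For `j` coprime to `n`, the automorphism `ψ_j : σ^i ↦ σ^{ij}` satisfies
`η ∘ ψ_j = η` iff `j ≡ 1 (mod r/k)`; consequently the subgroup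
`Aut_η(C_n) ≤ Aut(C_n)` has order `φ(n)/φ(r/k)`. -/
theorem compatAut_iff_and_card {G F : Type*} [Group G] [Field F] [Fintype F]
    (q r k n : ℕ) (hq : q.Prime) (hr : 0 < r) (hk : 0 < k) (hn : 0 < n)
    (hkr : k ∣ r) (hrkn : r / k ∣ n)
    (hF : Fintype.card F = q ^ r)
    (σ : G) (hgen : ∀ g : G, g ∈ Subgroup.zpowers σ) (hord : orderOf σ = n)
    (η : G →* RingAut F) (hη : ∀ x : F, η σ x = x ^ q ^ k) :
    (∀ j : ℕ, Nat.gcd j n = 1 → ∀ ψ : MulAut G, ψ σ = σ ^ j →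
      (ψ ∈ compatAut η ↔ j ≡ 1 [MOD r / k])) ∧
    Nat.card (compatAut η) = Nat.totient n / Nat.totient (r / k) :=
  compatAut_iff_and_card_general q r k n hq hk hn hkr hF σ hgen hord η hη
end

section
/- Let G be a finite abelian group acting trivially on ℂ^*. Two 2-cocycles f_1, f_2 : G × G → ℂ^* are cohomologous if and only if they yield the same alternating bicharacter, i.e., f_1(g,h) · f_1(h,g)^{-1} = f_2(g,h) · f_2(h,g)^{-1} for all g, h ∈ G. -/
/-!
A coboundary `r g * r h * (r (g * h))⁻¹` on an abelian group is symmetric, so cohomologous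
cocycles have the same alternating bicharacter. Conversely, if the bicharacters agree, the
ratio `c = f₁ / f₂` is a symmetric cocycle. Then the central extension `E` of `G` by `ℂˣ`
built from `c` is abelian, and since `ℂˣ` is divisible, hence an injective `ℤ`-module, the
inclusion `ι : ℂˣ → E` has a retraction `φ`. Applying `φ` to
`(g, 1) * (h, 1) = ι (c g h) * (g * h, 1)` shows that `r g = φ (g, 1)` trivializes `c`.
-/

/-- 2-cocycle condition for a trivial action, with values in a commutative group `M`. -/
def IsTwoCocycleTriv {G M : Type*} [Group G] [CommGroup M] (f : G → G → M) : Prop :=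
  ∀ g h k : G, f h k * f g (h * k) = f g h * f (g * h) k

/-- 2-coboundary condition for a trivial action. -/
def IsTwoCoboundaryTriv {G M : Type*} [Group G] [CommGroup M] (f : G → G → M) : Prop :=
  ∃ r : G → M, ∀ g h : G, f g h = r g * r h * (r (g * h))⁻¹

/-- Two 2-cocycles are cohomologous if their pointwise ratio is a 2-coboundary. -/
def CohomologousTriv {G M : Type*} [Group G] [CommGroup M] (f₁ f₂ : G → G → M) : Prop :=
  IsTwoCoboundaryTriv fun g h => f₁ g h * (f₂ g h)⁻¹

noncomputable instance Units.rootableByNat {K : Type*} [Field K] [IsAlgClosed K] :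
    RootableBy Kˣ ℕ :=
  rootableByOfPowLeftSurj _ _ fun {n} hn z => by
    obtain ⟨w, hw⟩ := IsAlgClosed.exists_pow_nat_eq (z : K) (Nat.pos_of_ne_zero hn)
    have hw0 : w ≠ 0 := by
      rintro rfl
      exact z.ne_zero (by rw [← hw, zero_pow hn])
    exact ⟨Units.mk0 w hw0, Units.ext hw⟩

theorem Module.Baer.additive_of_rootableBy (M : Type*) [CommGroup M] [RootableBy M ℕ] :
    Module.Baer ℤ (Additive M) :=
  letI : DivisibleBy (Additive M) ℕ := divisibleByOfSMulRightSurj _ _ fun hn a =>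
    ⟨.ofMul (RootableBy.root a.toMul _), congrArg Additive.ofMul (RootableBy.root_cancel _ hn)⟩
  letI := AddGroup.divisibleByIntOfDivisibleByNat (Additive M)
  Module.Baer.of_divisible _

theorem MonoidHom.exists_leftInverse_of_injective {M E : Type*} [CommGroup M] [RootableBy M ℕ]
    [CommGroup E] (ι : M →* E) (hι : Function.Injective ι) :
    ∃ φ : E →* M, Function.LeftInverse φ ι := by
  obtain ⟨φ, hφ⟩ := (Module.Baer.additive_of_rootableBy M).extension_property_addMonoidHom
    (MonoidHom.toAdditive ι) hι (AddMonoidHom.id _)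
  exact ⟨MonoidHom.toAdditive.symm φ,
    fun m => congrArg Additive.toMul (DFunLike.congr_fun hφ (.ofMul m))⟩

section Cocycle

variable {G M : Type*} [CommGroup M]

theorem IsTwoCoboundaryTriv.apply_comm [CommGroup G] {f : G → G → M}
    (hf : IsTwoCoboundaryTriv f) (g h : G) : f g h = f h g := by
  obtain ⟨r, hr⟩ := hf
  rw [hr, hr, mul_comm g, mul_comm (r g)]

variable [Group G] {c : G → G → M}

theorem IsTwoCocycleTriv.mul_inv {f₁ f₂ : G → G → M} (h₁ : IsTwoCocycleTriv f₁)
    (h₂ : IsTwoCocycleTriv f₂) : IsTwoCocycleTriv fun g h => f₁ g h * (f₂ g h)⁻¹ := by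
  intro g h k
  dsimp only
  rw [mul_mul_mul_comm, ← _root_.mul_inv, h₁, h₂, _root_.mul_inv, mul_mul_mul_comm]

theorem IsTwoCocycleTriv.apply_one_left (hc : IsTwoCocycleTriv c) (g : G) : c 1 g = c 1 1 := by
  simpa using hc 1 1 g

end Cocycle

/-- The central extension of `G` by `M` classified by `c`. Its identity is `(1, (c 1 1)⁻¹)`,
as `c` need not be normalized. -/
@[ext] structure CocycleExtension {G M : Type*} (c : G → G → M) where
  base : G
  fiber : M

namespace CocycleExtension

variable {G M : Type*} [Group G] [CommGroup M] {c : G → G → M}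

instance : Mul (CocycleExtension c) :=
  ⟨fun x y => ⟨x.base * y.base, x.fiber * y.fiber * c x.base y.base⟩⟩

instance : One (CocycleExtension c) := ⟨⟨1, (c 1 1)⁻¹⟩⟩

instance : Inv (CocycleExtension c) :=
  ⟨fun x => ⟨x.base⁻¹, (x.fiber * c x.base⁻¹ x.base * c 1 1)⁻¹⟩⟩

theorem mk_mul_mk (g h : G) (m n : M) :
    (⟨g, m⟩ : CocycleExtension c) * ⟨h, n⟩ = ⟨g * h, m * n * c g h⟩ := rfl

theorem one_def : (1 : CocycleExtension c) = ⟨1, (c 1 1)⁻¹⟩ := rfl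

theorem inv_mk (g : G) (m : M) :
    (⟨g, m⟩ : CocycleExtension c)⁻¹ = ⟨g⁻¹, (m * c g⁻¹ g * c 1 1)⁻¹⟩ := rfl

abbrev group (hc : IsTwoCocycleTriv c) : Group (CocycleExtension c) :=
  Group.ofLeftAxioms
    (fun ⟨g, m⟩ ⟨h, n⟩ ⟨k, p⟩ => by
      simp only [mk_mul_mk, mk.injEq, mul_assoc, true_and]
      calc m * (n * (c g h * (p * c (g * h) k)))
          = m * (n * (p * (c g h * c (g * h) k))) := by ac_rfl
        _ = m * (n * (p * (c h k * c g (h * k)))) := by rw [hc])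
    (fun ⟨g, m⟩ => by
      rw [one_def, mk_mul_mk, one_mul, hc.apply_one_left g, inv_mul_cancel_comm])
    (fun ⟨g, m⟩ => by
      rw [inv_mk, mk_mul_mk, one_def, inv_mul_cancel]
      congr 1
      group)

def ofFiber (m : M) : CocycleExtension c := ⟨1, m * (c 1 1)⁻¹⟩

theorem ofFiber_injective : Function.Injective (ofFiber (c := c)) := fun _ _ h =>
  mul_right_cancel (congrArg fiber h)

theorem ofFiber_mul (m n : M) : ofFiber (c := c) (m * n) = ofFiber m * ofFiber n := by
  ext
  · exact (one_mul 1).symm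
  · show m * n * (c 1 1)⁻¹ = m * (c 1 1)⁻¹ * (n * (c 1 1)⁻¹) * c 1 1
    rw [mul_mul_mul_comm m, mul_assoc (m * n), inv_mul_cancel_right]

theorem mk_one_mul_mk_one (hc : IsTwoCocycleTriv c) (g h : G) :
    (⟨g, 1⟩ : CocycleExtension c) * ⟨h, 1⟩ = ofFiber (c g h) * ⟨g * h, 1⟩ := by
  ext
  · exact (one_mul _).symm
  · show 1 * 1 * c g h = c g h * (c 1 1)⁻¹ * 1 * c 1 (g * h)
    rw [hc.apply_one_left (g * h), one_mul, one_mul, mul_one, inv_mul_cancel_right]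

end CocycleExtension

abbrev CocycleExtension.commGroup {G M : Type*} [CommGroup G] [CommGroup M] {c : G → G → M}
    (hc : IsTwoCocycleTriv c) (hs : ∀ g h, c g h = c h g) : CommGroup (CocycleExtension c) :=
  { group hc with
    mul_comm := fun ⟨g, m⟩ ⟨h, n⟩ => by
      rw [mk_mul_mk, mk_mul_mk, mul_comm g, mul_comm m, hs] }

theorem IsTwoCocycleTriv.isTwoCoboundaryTriv_of_symm {G M : Type*} [CommGroup G] [CommGroup M]
    [RootableBy M ℕ] {c : G → G → M} (hc : IsTwoCocycleTriv c) (hs : ∀ g h, c g h = c h g) :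
    IsTwoCoboundaryTriv c := by
  let := CocycleExtension.commGroup hc hs
  obtain ⟨φ, hφ⟩ := (MonoidHom.mk' _ (CocycleExtension.ofFiber_mul (c := c)))
    |>.exists_leftInverse_of_injective CocycleExtension.ofFiber_injective
  refine ⟨fun g => φ ⟨g, 1⟩, fun g h => ?_⟩
  have hsplit := congrArg φ (CocycleExtension.mk_one_mul_mk_one hc g h)
  rw [map_mul, map_mul, show φ (.ofFiber (c g h)) = c g h from hφ (c g h)] at hsplit
  rw [hsplit, mul_inv_cancel_right]

theorem cohomologous_iff_same_bicharacter_general {G : Type*} [CommGroup G]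
    (f₁ f₂ : G → G → ℂˣ) (h₁ : IsTwoCocycleTriv f₁) (h₂ : IsTwoCocycleTriv f₂) :
    CohomologousTriv f₁ f₂ ↔
      ∀ g h : G, f₁ g h * (f₁ h g)⁻¹ = f₂ g h * (f₂ h g)⁻¹ := by
  have ratio_comm_iff (g h : G) : f₁ g h * (f₂ g h)⁻¹ = f₁ h g * (f₂ h g)⁻¹ ↔
      f₁ g h * (f₁ h g)⁻¹ = f₂ g h * (f₂ h g)⁻¹ := by
    simp only [← div_eq_mul_inv]
    exact div_eq_div_iff_div_eq_div
  constructor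
  · exact fun hcoh g h => (ratio_comm_iff g h).1 (hcoh.apply_comm g h)
  · exact fun hα => (h₁.mul_inv h₂).isTwoCoboundaryTriv_of_symm
      fun g h => (ratio_comm_iff g h).2 (hα g h)

/-- two 2-cocycles on a finite abelian group `G` with values in `ℂ^*`
(trivial action) are cohomologous iff they yield the same alternating bicharacter
`α_f(g,h) = f(g,h)·f(h,g)⁻¹`. -/
theorem cohomologous_iff_same_bicharacter {G : Type*} [CommGroup G] [Finite G]
    (f₁ f₂ : G → G → ℂˣ) (h₁ : IsTwoCocycleTriv f₁) (h₂ : IsTwoCocycleTriv f₂) :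
    CohomologousTriv f₁ f₂ ↔
      ∀ g h : G, f₁ g h * (f₁ h g)⁻¹ = f₂ g h * (f₂ h g)⁻¹ :=
  cohomologous_iff_same_bicharacter_general f₁ f₂ h₁ h₂
end
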